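/- arXiv:2502.05545 — 2 statements merged into one kernel-verified Lean document; each statement's English description precedes it below -/
import Mathlib

section
/- The function H is strictly increasing on [0, ∞); that is, for all real numbers 0 ≤ z < z', one has H(z) < H(z'). -/
noncomputable section

/-- The error function `erf x = (2/√π) ∫₀ˣ exp(−s²) ds`. -/
def erf (x : ℝ) : ℝ := (2 / Real.sqrt Real.pi) * ∫ s in (0:ℝ)..x, Real.exp (-(s^2))

/-- The complementary error function. -/
def erfc (x : ℝ) : ℝ := 1 - erf x

/-- Physical data of the three-phase Stefan problem: positive thermal conductivities,
specific heats, mass density, latent heats, and temperatures `B > C > D`. -/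
structure Params where
  k₁ : ℝ
  k₂ : ℝ
  k₃ : ℝ
  c₁ : ℝ
  c₂ : ℝ
  c₃ : ℝ
  ρ : ℝ
  ℓ₁ : ℝ
  ℓ₂ : ℝ
  B : ℝ
  C : ℝ
  D : ℝ
  hk₁ : 0 < k₁
  hk₂ : 0 < k₂
  hk₃ : 0 < k₃
  hc₁ : 0 < c₁
  hc₂ : 0 < c₂
  hc₃ : 0 < c₃
  hρ : 0 < ρ
  hℓ₁ : 0 < ℓ₁
  hℓ₂ : 0 < ℓ₂
  hBC : C < B
  hCD : D < C

namespace Params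

/-- Thermal diffusivity of phase 1. -/
def α₁ (p : Params) : ℝ := p.k₁ / (p.ρ * p.c₁)

/-- Thermal diffusivity of phase 2. -/
def α₂ (p : Params) : ℝ := p.k₂ / (p.ρ * p.c₂)

/-- Thermal diffusivity of phase 3. -/
def α₃ (p : Params) : ℝ := p.k₃ / (p.ρ * p.c₃)

/-- Stefan number `Ste₁ = c₁(C−D)/ℓ₁`. -/
def Ste₁ (p : Params) : ℝ := p.c₁ * (p.C - p.D) / p.ℓ₁

/-- Stefan number `Ste₂ = c₂(B−C)/ℓ₂`. -/
def Ste₂ (p : Params) : ℝ := p.c₂ * (p.B - p.C) / p.ℓ₂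

/-- `φ(z) = z + (Ste₁/√π) exp(−z²)/erfc(z)`. -/
def φ (p : Params) (z : ℝ) : ℝ :=
  z + (p.Ste₁ / Real.sqrt Real.pi) * Real.exp (-(z^2)) / erfc z

/-- `H(z) = erf(z√(α₁/α₂)) − (Ste₂/√π)(ℓ₂/ℓ₁)√(k₂c₁/(k₁c₂)) exp(−z²α₁/α₂)/φ(z)`. -/
def H (p : Params) (z : ℝ) : ℝ :=
  erf (z * Real.sqrt (p.α₁ / p.α₂)) -
    (p.Ste₂ / Real.sqrt Real.pi) * (p.ℓ₂ / p.ℓ₁) *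
      Real.sqrt (p.k₂ * p.c₁ / (p.k₁ * p.c₂)) *
      (Real.exp (-(z^2) * (p.α₁ / p.α₂)) / p.φ z)

/-- `Q(z) = (ℓ₁/ℓ₂) φ(z) exp(z² α₁/α₂)`. -/
def Q (p : Params) (z : ℝ) : ℝ :=
  (p.ℓ₁ / p.ℓ₂) * p.φ z * Real.exp (z^2 * (p.α₁ / p.α₂))

/-- The function `T` arising from the Robin (convective) boundary condition with
heat-transfer coefficient `h₀` and bulk temperature `Ainf`. -/
def T (p : Params) (h₀ Ainf : ℝ) (z : ℝ) : ℝ :=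
  (p.Ste₂ / (Real.sqrt Real.pi * p.c₂)) * ((Ainf - p.B) / (p.B - p.C)) *
    Real.sqrt (p.k₃ * p.c₁ * p.c₃ / p.k₁) *
    (Real.exp (-(z^2) * p.α₁ * (1 / p.α₃ - 1 / p.α₂)) /
      (p.k₃ / (h₀ * Real.sqrt (Real.pi * p.α₃)) + erf (z * Real.sqrt (p.α₁ / p.α₃)))) -
  z * Real.exp (z^2 * (p.α₁ / p.α₂))

/-- The function `V` arising from the Dirichlet boundary condition with temperature `A`. -/
def V (p : Params) (A : ℝ) (z : ℝ) : ℝ :=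
  ((A - p.B) / p.ℓ₂) * Real.sqrt (p.c₁ * p.c₃ * p.k₃ / (Real.pi * p.k₁)) *
    (Real.exp (-(z^2) * (p.α₁ / p.α₃ - p.α₁ / p.α₂)) / erf (z * Real.sqrt (p.α₁ / p.α₃))) -
  z * Real.exp (z^2 * (p.α₁ / p.α₂))

/-- The function `P` arising from the Neumann boundary condition with flux coefficient `q₀`. -/
def P (p : Params) (q₀ : ℝ) (z : ℝ) : ℝ :=
  Real.exp (z^2 * (p.α₁ / p.α₂)) *
    (-z + (q₀ / p.ℓ₂) * Real.sqrt (p.c₁ / (p.ρ * p.k₁)) * Real.exp (-(z^2) * (p.α₁ / p.α₃)))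

/-- Critical heat-transfer coefficient `h₂`. -/
def h2 (p : Params) (Ainf z₀ : ℝ) : ℝ :=
  ((p.B - p.C) / (Ainf - p.B)) *
    Real.sqrt (p.k₂ * p.k₃ * p.c₂ / (Real.pi * p.c₃ * p.α₃)) *
    (1 / erf (z₀ * Real.sqrt (p.α₁ / p.α₂)))

/-- Critical heat-flux coefficient `q₂`. -/
def q2 (p : Params) (z₀ : ℝ) : ℝ :=
  p.k₂ * (p.B - p.C) / (Real.sqrt (p.α₂ * Real.pi) * erf (z₀ * Real.sqrt (p.α₁ / p.α₂)))

end Params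

open Real MeasureTheory Set Filter Topology

/-!
`H` is `erf` of a rescaled argument minus a positive multiple of `exp (-a z²) / φ z`. The first
term is strictly increasing; the numerator of the second is positive and strictly decreasing on
`[0, ∞)`, and `φ` is positive and nondecreasing there. The monotonicity of `φ` reduces to that of
`exp (-z²) / erfc z`, whose derivative has the sign of `exp (-z²) / √π - z erfc z`; this is
nonnegative by the Mills-ratio bound `z ∫_z^∞ exp (-s²) ds ≤ ∫_z^∞ s exp (-s²) ds = exp (-z²) / 2`.
-/

lemma integrable_exp_neg_sq : Integrable fun s : ℝ => exp (-(s ^ 2)) := by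
  simpa using integrable_exp_neg_mul_sq one_pos

lemma hasDerivAt_erf (x : ℝ) : HasDerivAt erf (2 / √π * exp (-(x ^ 2))) x := by
  have hc : Continuous fun s : ℝ => exp (-(s ^ 2)) := by fun_prop
  exact (intervalIntegral.integral_hasDerivAt_right (hc.intervalIntegrable 0 x)
    (hc.stronglyMeasurableAtFilter _ _) hc.continuousAt).const_mul _

lemma hasDerivAt_erfc (x : ℝ) : HasDerivAt erfc (-(2 / √π * exp (-(x ^ 2)))) x :=
  (hasDerivAt_erf x).const_sub 1

lemma erf_strictMono : StrictMono erf :=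
  strictMono_of_deriv_pos fun x => by rw [(hasDerivAt_erf x).deriv]; positivity

lemma erfc_eq_integral_Ioi (z : ℝ) : erfc z = 2 / √π * ∫ s in Ioi z, exp (-(s ^ 2)) := by
  have hhalf : ∫ s in Ioi (0 : ℝ), exp (-(s ^ 2)) = √π / 2 := by
    simpa using integral_gaussian_Ioi 1
  have hsplit := intervalIntegral.integral_Ioi_sub_Ioi' (a := 0) (b := z)
    integrable_exp_neg_sq.integrableOn integrable_exp_neg_sq.integrableOn
  rw [erfc, erf, ← hsplit, hhalf]
  field_simp
  ring

lemma integral_Ioi_exp_neg_sq_pos (z : ℝ) : 0 < ∫ s in Ioi z, exp (-(s ^ 2)) := by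
  refine (setIntegral_pos_iff_support_of_nonneg_ae (ae_of_all _ fun s => (exp_pos _).le)
    integrable_exp_neg_sq.integrableOn).mpr ?_
  simp [Function.support, exp_ne_zero]

lemma erfc_pos (z : ℝ) : 0 < erfc z := by
  rw [erfc_eq_integral_Ioi]
  have := integral_Ioi_exp_neg_sq_pos z
  positivity

lemma integral_Ioi_mul_exp_neg_sq (z : ℝ) :
    ∫ s in Ioi z, s * exp (-(s ^ 2)) = exp (-(z ^ 2)) / 2 := by
  have hderiv (x : ℝ) : HasDerivAt (fun s => -exp (-(s ^ 2)) / 2) (x * exp (-(x ^ 2))) x :=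
    ((hasDerivAt_pow 2 x).fun_neg.exp.fun_neg.div_const 2).congr_deriv (by norm_num; ring)
  have hlim : Tendsto (fun s : ℝ => -exp (-(s ^ 2)) / 2) atTop (𝓝 0) := by
    simpa using ((tendsto_exp_atBot.comp
      (tendsto_neg_atTop_atBot.comp (tendsto_pow_atTop two_ne_zero))).neg.div_const 2)
  rw [integral_Ioi_of_hasDerivAt_of_tendsto' (fun x _ => hderiv x)
    (by simpa using (integrable_mul_exp_neg_mul_sq one_pos).integrableOn) hlim]
  ring

lemma mul_erfc_le (z : ℝ) : z * erfc z ≤ exp (-(z ^ 2)) / √π := by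
  have htail : z * ∫ s in Ioi z, exp (-(s ^ 2)) ≤ exp (-(z ^ 2)) / 2 := by
    rw [← integral_Ioi_mul_exp_neg_sq, ← integral_const_mul]
    refine setIntegral_mono_on (integrable_exp_neg_sq.const_mul z).integrableOn
      (by simpa using (integrable_mul_exp_neg_mul_sq one_pos).integrableOn) measurableSet_Ioi
      fun s hs => ?_
    exact mul_le_mul_of_nonneg_right (le_of_lt hs) (exp_pos _).le
  rw [erfc_eq_integral_Ioi]
  calc z * (2 / √π * ∫ s in Ioi z, exp (-(s ^ 2)))
      = 2 / √π * (z * ∫ s in Ioi z, exp (-(s ^ 2))) := by ring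
    _ ≤ 2 / √π * (exp (-(z ^ 2)) / 2) := by gcongr
    _ = exp (-(z ^ 2)) / √π := by ring

lemma monotone_exp_neg_sq_div_erfc : Monotone fun z => exp (-(z ^ 2)) / erfc z := by
  have hderiv (x : ℝ) : HasDerivAt (fun z => exp (-(z ^ 2)) / erfc z)
      (2 * exp (-(x ^ 2)) * (exp (-(x ^ 2)) / √π - x * erfc x) / erfc x ^ 2) x :=
    ((hasDerivAt_pow 2 x).fun_neg.exp.div (hasDerivAt_erfc x) (erfc_pos x).ne').congr_deriv
      (by norm_num; ring)
  refine monotone_of_deriv_nonneg (fun x => (hderiv x).differentiableAt) fun x => ?_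
  rw [(hderiv x).deriv]
  have := sub_nonneg.mpr (mul_erfc_le x)
  positivity

namespace Params

variable (p : Params)

lemma Ste₁_pos : 0 < p.Ste₁ := div_pos (mul_pos p.hc₁ (sub_pos.mpr p.hCD)) p.hℓ₁

lemma Ste₂_pos : 0 < p.Ste₂ := div_pos (mul_pos p.hc₂ (sub_pos.mpr p.hBC)) p.hℓ₂

lemma α₁_div_α₂_pos : 0 < p.α₁ / p.α₂ :=
  div_pos (div_pos p.hk₁ (mul_pos p.hρ p.hc₁)) (div_pos p.hk₂ (mul_pos p.hρ p.hc₂))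

lemma φ_eq (z : ℝ) : p.φ z = z + p.Ste₁ / √π * (exp (-(z ^ 2)) / erfc z) := by
  rw [φ, mul_div_assoc]

lemma φ_pos {z : ℝ} (hz : 0 ≤ z) : 0 < p.φ z := by
  have := p.Ste₁_pos
  have := erfc_pos z
  rw [φ_eq]
  positivity

lemma φ_monotone : Monotone p.φ := fun z z' hzz' => by
  have := p.Ste₁_pos
  have := monotone_exp_neg_sq_div_erfc hzz'
  rw [φ_eq, φ_eq]
  gcongr

lemma strictAntiOn_exp_div_φ :
    StrictAntiOn (fun z => exp (-(z ^ 2) * (p.α₁ / p.α₂)) / p.φ z) (Ici 0) := by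
  intro z (hz : 0 ≤ z) z' (hz' : 0 ≤ z') hzz'
  have := p.α₁_div_α₂_pos
  have := p.φ_pos hz
  calc exp (-(z' ^ 2) * (p.α₁ / p.α₂)) / p.φ z'
      < exp (-(z ^ 2) * (p.α₁ / p.α₂)) / p.φ z' := by
        have := p.φ_pos hz'
        gcongr
    _ ≤ exp (-(z ^ 2) * (p.α₁ / p.α₂)) / p.φ z := by
        gcongr
        exact p.φ_monotone hzz'.le

end Params

/-- `H` is strictly increasing on `[0, ∞)`. -/
theorem H_strictMono (p : Params) :
    ∀ z z' : ℝ, 0 ≤ z → z < z' → p.H z < p.H z' := by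
  intro z z' hz hzz'
  have herf : erf (z * √(p.α₁ / p.α₂)) < erf (z' * √(p.α₁ / p.α₂)) :=
    erf_strictMono (mul_lt_mul_of_pos_right hzz' (sqrt_pos.mpr p.α₁_div_α₂_pos))
  have hquot := p.strictAntiOn_exp_div_φ hz (hz.trans hzz'.le) hzz'
  have hcoeff : 0 < p.Ste₂ / √π * (p.ℓ₂ / p.ℓ₁) * √(p.k₂ * p.c₁ / (p.k₁ * p.c₂)) := by
    have := p.Ste₂_pos
    have := p.hℓ₁
    have := p.hℓ₂
    have : 0 < p.k₂ * p.c₁ / (p.k₁ * p.c₂) :=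
      div_pos (mul_pos p.hk₂ p.hc₁) (mul_pos p.hk₁ p.hc₂)
    positivity
  unfold Params.H
  linarith [mul_lt_mul_of_pos_left hquot hcoeff]
end
end

section
/- Assume A∞ > B and h₀ > 0. Then the inequality (A∞−B)·√(c₁·c₃·α₃/(k₁·k₃))·h₀ > ℓ₁·φ(z₀)·exp(z₀²·α₁/α₂) holds if and only if h₀ > h₂, where h₂ := ((B−C)/(A∞−B))·√(k₂·k₃·c₂/(π·c₃·α₃))·(1/erf(z₀·√(α₁/α₂))). -/
noncomputable section

/-! The zero `z₀` of `H` solves `H z₀ = 0` for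
`ℓ₁ φ(z₀) exp(z₀² α₁/α₂) = c₂ (B−C) √(k₂c₁/(k₁c₂)) / (√π erf(z₀√(α₁/α₂)))`, and after combining
square roots this is exactly `M h₂` with `M = (A∞−B) √(c₁c₃α₃/(k₁k₃)) > 0`. The inequality
therefore reads `M h₀ > M h₂`. -/

lemma erf_pos {x : ℝ} (hx : 0 < x) : 0 < erf x := by
  unfold erf
  have hintegral : 0 < ∫ s in (0:ℝ)..x, Real.exp (-(s ^ 2)) :=
    intervalIntegral.intervalIntegral_pos_of_pos
      ((by fun_prop : Continuous fun s : ℝ => Real.exp (-(s ^ 2))).intervalIntegrable _ _)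
      (fun s => Real.exp_pos _) hx
  have := Real.pi_pos
  positivity

namespace Params

variable (p : Params)

lemma α₁_pos : 0 < p.α₁ := div_pos p.hk₁ (mul_pos p.hρ p.hc₁)

lemma α₂_pos : 0 < p.α₂ := div_pos p.hk₂ (mul_pos p.hρ p.hc₂)

lemma α₃_pos : 0 < p.α₃ := div_pos p.hk₃ (mul_pos p.hρ p.hc₃)

lemma sqrt_mul_sqrt_eq :
    Real.sqrt (p.k₂ * p.k₃ * p.c₂ / (Real.pi * p.c₃ * p.α₃)) *
        Real.sqrt (p.c₁ * p.c₃ * p.α₃ / (p.k₁ * p.k₃)) =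
      p.c₂ * Real.sqrt (p.k₂ * p.c₁ / (p.k₁ * p.c₂)) / Real.sqrt Real.pi := by
  have := p.hk₁; have := p.hk₂; have := p.hk₃; have := p.hc₁; have := p.hc₂; have := p.hc₃
  have := p.α₃_pos; have := Real.pi_pos
  have hrhs : p.c₂ * Real.sqrt (p.k₂ * p.c₁ / (p.k₁ * p.c₂)) / Real.sqrt Real.pi =
      Real.sqrt (p.c₂ ^ 2 * (p.k₂ * p.c₁ / (p.k₁ * p.c₂)) / Real.pi) := by
    rw [Real.sqrt_div' _ Real.pi_pos.le, Real.sqrt_mul (by positivity), Real.sqrt_sq p.hc₂.le]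
  rw [hrhs, ← Real.sqrt_mul (by positivity)]
  congr 1
  field_simp

lemma h2_mul_eq {Ainf : ℝ} (hAinf : Ainf ≠ p.B) (z₀ : ℝ) :
    (Ainf - p.B) * Real.sqrt (p.c₁ * p.c₃ * p.α₃ / (p.k₁ * p.k₃)) * p.h2 Ainf z₀ =
      p.c₂ * (p.B - p.C) * Real.sqrt (p.k₂ * p.c₁ / (p.k₁ * p.c₂)) /
        (Real.sqrt Real.pi * erf (z₀ * Real.sqrt (p.α₁ / p.α₂))) := by
  have hAB : Ainf - p.B ≠ 0 := sub_ne_zero.2 hAinf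
  have := Real.pi_pos
  calc _ = (p.B - p.C) * (Real.sqrt (p.k₂ * p.k₃ * p.c₂ / (Real.pi * p.c₃ * p.α₃)) *
          Real.sqrt (p.c₁ * p.c₃ * p.α₃ / (p.k₁ * p.k₃))) / erf (z₀ * Real.sqrt (p.α₁ / p.α₂)) := by
        unfold h2; field_simp
    _ = _ := by rw [p.sqrt_mul_sqrt_eq]; field_simp

lemma φ_mul_exp_eq_of_H_eq_zero {z : ℝ} (hz : 0 < z) (hH : p.H z = 0) :
    p.ℓ₁ * p.φ z * Real.exp (z ^ 2 * (p.α₁ / p.α₂)) =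
      p.c₂ * (p.B - p.C) * Real.sqrt (p.k₂ * p.c₁ / (p.k₁ * p.c₂)) /
        (Real.sqrt Real.pi * erf (z * Real.sqrt (p.α₁ / p.α₂))) := by
  have herf : 0 < erf (z * Real.sqrt (p.α₁ / p.α₂)) :=
    erf_pos (mul_pos hz (Real.sqrt_pos.2 (div_pos p.α₁_pos p.α₂_pos)))
  rw [H, sub_eq_zero] at hH
  -- `φ z = 0` would force `erf (z √(α₁/α₂)) = 0` through the junk value of `/ 0`.
  have hφ : p.φ z ≠ 0 := by
    intro h
    rw [h, div_zero, mul_zero] at hH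
    exact herf.ne' hH
  have := p.hℓ₁; have := p.hℓ₂; have := p.hc₁; have := p.hc₂; have := p.hk₁; have := p.hk₂
  have := sub_pos.2 p.hBC; have := Real.pi_pos
  rw [hH, Ste₂, neg_mul, Real.exp_neg]
  field_simp

end Params

theorem ineq_iff_h0_gt_h2_general (p : Params) (h₀ Ainf z₀ : ℝ)
    (hAinf : p.B < Ainf)
    (hz₀ : 0 < z₀ ∧ p.H z₀ = 0) :
    ((Ainf - p.B) * Real.sqrt (p.c₁ * p.c₃ * p.α₃ / (p.k₁ * p.k₃)) * h₀ >
        p.ℓ₁ * p.φ z₀ * Real.exp (z₀^2 * (p.α₁ / p.α₂))) ↔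
      h₀ > p.h2 Ainf z₀ := by
  have hM : 0 < (Ainf - p.B) * Real.sqrt (p.c₁ * p.c₃ * p.α₃ / (p.k₁ * p.k₃)) := by
    have := p.hc₁; have := p.hc₃; have := p.hk₁; have := p.hk₃; have := p.α₃_pos
    exact mul_pos (sub_pos.2 hAinf) (Real.sqrt_pos.2 (by positivity))
  rw [p.φ_mul_exp_eq_of_H_eq_zero hz₀.1 hz₀.2, ← p.h2_mul_eq hAinf.ne', gt_iff_lt, gt_iff_lt,
    mul_lt_mul_iff_right₀ hM]

/-- for `A∞ > B`, `h₀ > 0`, the inequality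
`(A∞−B)√(c₁c₃α₃/(k₁k₃)) h₀ > ℓ₁ φ(z₀) exp(z₀² α₁/α₂)` holds iff `h₀ > h₂`. -/
theorem ineq_iff_h0_gt_h2 (p : Params) (h₀ Ainf z₀ : ℝ)
    (hAinf : p.B < Ainf) (hh₀ : 0 < h₀)
    (hz₀ : 0 < z₀ ∧ p.H z₀ = 0) :
    ((Ainf - p.B) * Real.sqrt (p.c₁ * p.c₃ * p.α₃ / (p.k₁ * p.k₃)) * h₀ >
        p.ℓ₁ * p.φ z₀ * Real.exp (z₀^2 * (p.α₁ / p.α₂))) ↔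
      h₀ > p.h2 Ainf z₀ :=
  ineq_iff_h0_gt_h2_general p h₀ Ainf z₀ hAinf hz₀
end
end
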